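/- arXiv:1301.4628 — 3 statements merged into one kernel-verified Lean document; each statement's English description precedes it below -/
import Mathlib

section
/- Let d ≤ D in Θ with d < D, and define ρ(a, δ) = log(β(a)/β(δ)) + (δ − a) H(a) where H = β′/β is strictly decreasing. Then there exists a unique δ* ∈ (d, D) such that ρ(d, δ*) = ρ(D, δ*), and it is given explicitly by δ* = [D·H(D) − d·H(d) − log(β(D)/β(d))] / (H(D) − H(d)). -/
/-!
Write `g = log ∘ β`, so that `g' = H` and `ρ(a, δ) = g(a) + (δ - a) H(a) - g(δ)`: the equation
`ρ(d, δ) = ρ(D, δ)` says that `δ` is where the tangent lines of `g` at `d` and at `D` meet, and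
solving this linear equation gives the formula for `δ*`. Since `H` is strictly decreasing, the mean
value theorem puts the secant slope of `g` over `[d, D]` strictly between `H(D)` and `H(d)`, which
is exactly what places the intersection of the two tangents strictly between `d` and `D`.
-/

open Real Set

lemma tangent_lines_eq_iff {a b ga gb sa sb x : ℝ} (hs : sa ≠ sb) :
    ga + (x - a) * sa = gb + (x - b) * sb ↔ x = (b * sb - a * sa - (gb - ga)) / (sb - sa) := by
  have : sb - sa ≠ 0 := sub_ne_zero.2 hs.symm
  rw [eq_div_iff this]
  constructor <;> intro h <;> linarith

section StrictAntiDeriv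

variable {g g' : ℝ → ℝ} {a b : ℝ}

lemma slope_mem_Ioo_of_strictAntiOn_deriv (hab : a < b)
    (hg : ∀ x ∈ Icc a b, HasDerivAt g (g' x) x) (hg' : StrictAntiOn g' (Icc a b)) :
    (g b - g a) / (b - a) ∈ Ioo (g' b) (g' a) := by
  obtain ⟨c, hc, hslope⟩ := exists_hasDerivAt_eq_slope g g' hab
    (fun x hx => (hg x hx).continuousAt.continuousWithinAt)
    (fun x hx => hg x (Ioo_subset_Icc_self hx))
  rw [← hslope]
  exact ⟨hg' (Ioo_subset_Icc_self hc) (right_mem_Icc.2 hab.le) hc.2,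
    hg' (left_mem_Icc.2 hab.le) (Ioo_subset_Icc_self hc) hc.1⟩

lemma tangent_intersection_mem_Ioo (hab : a < b)
    (hg : ∀ x ∈ Icc a b, HasDerivAt g (g' x) x) (hg' : StrictAntiOn g' (Icc a b)) :
    (b * g' b - a * g' a - (g b - g a)) / (g' b - g' a) ∈ Ioo a b := by
  obtain ⟨hlow, hhigh⟩ := slope_mem_Ioo_of_strictAntiOn_deriv hab hg hg'
  have hba : 0 < b - a := sub_pos.2 hab
  rw [lt_div_iff₀ hba] at hlow
  rw [div_lt_iff₀ hba] at hhigh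
  have hden : g' b - g' a < 0 :=
    sub_neg.2 (hg' (left_mem_Icc.2 hab.le) (right_mem_Icc.2 hab.le) hab)
  constructor
  · rw [lt_div_iff_of_neg hden]; nlinarith
  · rw [div_lt_iff_of_neg hden]; nlinarith

end StrictAntiDeriv

/-- Let d < D in Θ and
`ρ(a, δ) = log(β(a)/β(δ)) + (δ − a) H(a)` with `H = β′/β` strictly decreasing.
Then there exists a unique `δ* ∈ (d, D)` with `ρ(d, δ*) = ρ(D, δ*)`, given
explicitly by `δ* = [D·H(D) − d·H(d) − log(β(D)/β(d))]/(H(D) − H(d))`. -/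
theorem stmt_5 (Θ : Set ℝ) (hΘ : Convex ℝ Θ) (β β' : ℝ → ℝ)
    (hβpos : ∀ s ∈ Θ, 0 < β s)
    (hβ' : ∀ s ∈ Θ, HasDerivAt β (β' s) s)
    (H : ℝ → ℝ) (hHdef : ∀ s, H s = β' s / β s)
    (hH : StrictAntiOn H Θ)
    (d D : ℝ) (hd : d ∈ Θ) (hD : D ∈ Θ) (hdD : d < D)
    (ρ : ℝ → ℝ → ℝ)
    (hρ : ∀ a δ, ρ a δ = Real.log (β a / β δ) + (δ - a) * H a)
    (δstar : ℝ)
    (hδstar : δstar =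
      (D * H D - d * H d - Real.log (β D / β d)) / (H D - H d)) :
    (δstar ∈ Ioo d D ∧ ρ d δstar = ρ D δstar) ∧
      ∀ δ ∈ Ioo d D, ρ d δ = ρ D δ → δ = δstar := by
  have hsub : Icc d D ⊆ Θ := hΘ.ordConnected.out hd hD
  have hlog : ∀ a ∈ Θ, ∀ δ ∈ Θ, log (β a / β δ) = log (β a) - log (β δ) := fun a ha δ hδ =>
    log_div (hβpos a ha).ne' (hβpos δ hδ).ne'
  have hg : ∀ s ∈ Icc d D, HasDerivAt (fun x => log (β x)) (H s) s := fun s hs => by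
    simpa only [hHdef s] using (hβ' s (hsub hs)).log (hβpos s (hsub hs)).ne'
  have hmem : δstar ∈ Ioo d D := by
    rw [hδstar, hlog D hD d hd]
    exact tangent_intersection_mem_Ioo hdD hg (hH.mono hsub)
  have hHne : H d ≠ H D := (hH hd hD hdD).ne'
  have key : ∀ δ ∈ Ioo d D, ρ d δ = ρ D δ ↔ δ = δstar := fun δ hδ => by
    have hδΘ := hsub (Ioo_subset_Icc_self hδ)
    rw [hρ, hρ, hlog d hd δ hδΘ, hlog D hD δ hδΘ, sub_add_eq_add_sub, sub_add_eq_add_sub,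
      sub_left_inj, tangent_lines_eq_iff hHne, hδstar, hlog D hD d hd]
  exact ⟨⟨hmem, (key δstar hmem).2 rfl⟩, fun δ hδ => (key δ hδ).1⟩
end

section
/- With d < D in Θ, H = β′/β strictly decreasing, ρ(a, δ) = log(β(a)/β(δ)) + (δ − a) H(a), and δ* = [D·H(D) − d·H(d) − log(β(D)/β(d))]/(H(D) − H(d)), the minimax identity holds: inf over δ ∈ Θ of max{ρ(d, δ), ρ(D, δ)} = ρ(d, δ*) = ρ(D, δ*), and this infimum is attained only at δ = δ*. -/
/-!
Write `L = log ∘ β`, so that `H = L'` and `ρ(a, δ) = L(a) + (δ - a) H(a) - L(δ)` is the gap at `δ`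
between the tangent line of `L` at `a` and `L` itself. Since `H` is strictly decreasing, `δ ↦ ρ(a, δ)`
strictly decreases to `0` at `δ = a` and strictly increases after it. The difference
`ρ(d, δ) - ρ(D, δ)` is the difference of two tangent lines, an affine function of `δ` with slope
`H(d) - H(D) > 0` vanishing at their intersection `δ*`; positivity of `ρ(D, d)` and `ρ(d, D)` puts
`δ*` strictly between `d` and `D`. Left of `δ*` the maximum is at least `ρ(D, ·) > ρ(D, δ*)`, right of
it at least `ρ(d, ·) > ρ(d, δ*)`.
-/

open Real Set

def tangentGap (L H : ℝ → ℝ) (a δ : ℝ) : ℝ := L a + (δ - a) * H a - L δ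

/-- The abscissa where the lines tangent to `L` (with slope `H`) at `d` and at `D` meet. -/
noncomputable def tangentCrossing (L H : ℝ → ℝ) (d D : ℝ) : ℝ :=
  (D * H D - d * H d - (L D - L d)) / (H D - H d)

section TangentGap

variable {Θ : Set ℝ} {L H : ℝ → ℝ}

@[simp]
lemma tangentGap_self (a : ℝ) : tangentGap L H a a = 0 := by
  simp [tangentGap]

lemma hasDerivAt_tangentGap {a δ : ℝ} (hL : HasDerivAt L (H δ) δ) :
    HasDerivAt (tangentGap L H a) (H a - H δ) δ := by
  have h := ((((hasDerivAt_id δ).sub_const a).mul_const (H a)).const_add (L a)).sub hL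
  rw [one_mul] at h
  exact h

lemma continuousOn_tangentGap (hL : ∀ s ∈ Θ, HasDerivAt L (H s) s) (a : ℝ) :
    ContinuousOn (tangentGap L H a) Θ :=
  fun s hs => (hasDerivAt_tangentGap (hL s hs)).continuousAt.continuousWithinAt

lemma strictMonoOn_tangentGap (hΘ : Convex ℝ Θ) (hL : ∀ s ∈ Θ, HasDerivAt L (H s) s)
    (hH : StrictAntiOn H Θ) {a : ℝ} (ha : a ∈ Θ) :
    StrictMonoOn (tangentGap L H a) (Θ ∩ Ici a) := by
  refine strictMonoOn_of_hasDerivWithinAt_pos (f' := fun s => H a - H s) (hΘ.inter (convex_Ici a))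
    ((continuousOn_tangentGap hL a).mono inter_subset_left) (fun s hs => ?_) fun s hs => ?_
  all_goals
    rw [interior_inter, interior_Ici] at hs
    have hsΘ : s ∈ Θ := interior_subset hs.1
  · exact (hasDerivAt_tangentGap (hL s hsΘ)).hasDerivWithinAt
  · exact sub_pos.2 (hH ha hsΘ hs.2)

lemma strictAntiOn_tangentGap (hΘ : Convex ℝ Θ) (hL : ∀ s ∈ Θ, HasDerivAt L (H s) s)
    (hH : StrictAntiOn H Θ) {a : ℝ} (ha : a ∈ Θ) :
    StrictAntiOn (tangentGap L H a) (Θ ∩ Iic a) := by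
  refine strictAntiOn_of_hasDerivWithinAt_neg (f' := fun s => H a - H s) (hΘ.inter (convex_Iic a))
    ((continuousOn_tangentGap hL a).mono inter_subset_left) (fun s hs => ?_) fun s hs => ?_
  all_goals
    rw [interior_inter, interior_Iic] at hs
    have hsΘ : s ∈ Θ := interior_subset hs.1
  · exact (hasDerivAt_tangentGap (hL s hsΘ)).hasDerivWithinAt
  · exact sub_neg.2 (hH hsΘ ha hs.2)

lemma tangentGap_pos (hΘ : Convex ℝ Θ) (hL : ∀ s ∈ Θ, HasDerivAt L (H s) s)
    (hH : StrictAntiOn H Θ) {a b : ℝ} (ha : a ∈ Θ) (hb : b ∈ Θ) (hab : a ≠ b) :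
    0 < tangentGap L H a b := by
  rcases hab.lt_or_gt with h | h
  · simpa using strictMonoOn_tangentGap hΘ hL hH ha ⟨ha, self_mem_Ici⟩ ⟨hb, h.le⟩ h
  · simpa using strictAntiOn_tangentGap hΘ hL hH ha ⟨hb, h.le⟩ ⟨ha, self_mem_Iic⟩ h

lemma tangentGap_sub_tangentGap {d D : ℝ} (hHdD : H d ≠ H D) (δ : ℝ) :
    tangentGap L H d δ - tangentGap L H D δ = (δ - tangentCrossing L H d D) * (H d - H D) := by
  have : H D - H d ≠ 0 := sub_ne_zero.2 hHdD.symm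
  unfold tangentGap tangentCrossing
  field_simp
  ring

lemma tangentGap_tangentCrossing {d D : ℝ} (hHdD : H d ≠ H D) :
    tangentGap L H d (tangentCrossing L H d D) = tangentGap L H D (tangentCrossing L H d D) :=
  sub_eq_zero.1 <| by rw [tangentGap_sub_tangentGap hHdD, sub_self, zero_mul]

lemma tangentCrossing_mem_Ioo (hΘ : Convex ℝ Θ) (hL : ∀ s ∈ Θ, HasDerivAt L (H s) s)
    (hH : StrictAntiOn H Θ) {d D : ℝ} (hd : d ∈ Θ) (hD : D ∈ Θ) (hdD : d < D) :
    tangentCrossing L H d D ∈ Ioo d D := by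
  have hHdD := hH hd hD hdD
  have at_d := tangentGap_sub_tangentGap (L := L) hHdD.ne' d
  have at_D := tangentGap_sub_tangentGap (L := L) hHdD.ne' D
  rw [tangentGap_self] at at_d at_D
  have gap_Dd := tangentGap_pos hΘ hL hH hD hd hdD.ne'
  have gap_dD := tangentGap_pos hΘ hL hH hd hD hdD.ne
  constructor <;> nlinarith

lemma tangentGap_tangentCrossing_lt_max (hΘ : Convex ℝ Θ) (hL : ∀ s ∈ Θ, HasDerivAt L (H s) s)
    (hH : StrictAntiOn H Θ) {d D δ : ℝ} (hd : d ∈ Θ) (hD : D ∈ Θ) (hdD : d < D) (hδ : δ ∈ Θ)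
    (hne : δ ≠ tangentCrossing L H d D) :
    tangentGap L H d (tangentCrossing L H d D) <
      max (tangentGap L H d δ) (tangentGap L H D δ) := by
  set c := tangentCrossing L H d D
  obtain ⟨hdc, hcD⟩ := tangentCrossing_mem_Ioo hΘ hL hH hd hD hdD
  have hc : c ∈ Θ := hΘ.ordConnected.out hd hD ⟨hdc.le, hcD.le⟩
  rcases hne.lt_or_gt with h | h
  · calc tangentGap L H d c = tangentGap L H D c := tangentGap_tangentCrossing (hH hd hD hdD).ne'
      _ < tangentGap L H D δ :=
        strictAntiOn_tangentGap hΘ hL hH hD ⟨hδ, (h.trans hcD).le⟩ ⟨hc, hcD.le⟩ h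
      _ ≤ _ := le_max_right _ _
  · exact (strictMonoOn_tangentGap hΘ hL hH hd ⟨hc, hdc.le⟩ ⟨hδ, (hdc.trans h).le⟩ h).trans_le
      (le_max_left _ _)

end TangentGap

/-- With d < D in Θ, `H = β′/β` strictly decreasing,
`ρ(a, δ) = log(β(a)/β(δ)) + (δ − a) H(a)` and
`δ* = [D·H(D) − d·H(d) − log(β(D)/β(d))]/(H(D) − H(d))`, the minimax identity
holds: the infimum over δ ∈ Θ of `max{ρ(d, δ), ρ(D, δ)}` equals
`ρ(d, δ*) = ρ(D, δ*)`, and this infimum is attained only at δ = δ*. -/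
theorem stmt_6 (Θ : Set ℝ) (hΘ : Convex ℝ Θ) (β β' : ℝ → ℝ)
    (hβpos : ∀ s ∈ Θ, 0 < β s)
    (hβ' : ∀ s ∈ Θ, HasDerivAt β (β' s) s)
    (H : ℝ → ℝ) (hHdef : ∀ s, H s = β' s / β s)
    (hH : StrictAntiOn H Θ)
    (d D : ℝ) (hd : d ∈ Θ) (hD : D ∈ Θ) (hdD : d < D)
    (ρ : ℝ → ℝ → ℝ)
    (hρ : ∀ a δ, ρ a δ = Real.log (β a / β δ) + (δ - a) * H a)
    (δstar : ℝ)
    (hδstar : δstar =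
      (D * H D - d * H d - Real.log (β D / β d)) / (H D - H d)) :
    δstar ∈ Ioo d D ∧ ρ d δstar = ρ D δstar ∧
      IsLeast ((fun δ => max (ρ d δ) (ρ D δ)) '' Θ) (ρ d δstar) ∧
      ∀ δ ∈ Θ, max (ρ d δ) (ρ D δ) = ρ d δstar → δ = δstar := by
  set L : ℝ → ℝ := fun s => Real.log (β s)
  have hL : ∀ s ∈ Θ, HasDerivAt L (H s) s := fun s hs => by
    simpa only [hHdef] using (hβ' s hs).log (hβpos s hs).ne'
  have hρL : ∀ a ∈ Θ, ∀ δ ∈ Θ, ρ a δ = tangentGap L H a δ := fun a ha δ hδ => by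
    rw [hρ, log_div (hβpos a ha).ne' (hβpos δ hδ).ne', tangentGap]
    ring
  have hδL : δstar = tangentCrossing L H d D := by
    rw [hδstar, log_div (hβpos D hD).ne' (hβpos d hd).ne', tangentCrossing]
  have hδ_mem : δstar ∈ Ioo d D := hδL ▸ tangentCrossing_mem_Ioo hΘ hL hH hd hD hdD
  have hδΘ : δstar ∈ Θ := hΘ.ordConnected.out hd hD (Ioo_subset_Icc_self hδ_mem)
  have heq : ρ d δstar = ρ D δstar := by
    rw [hρL d hd _ hδΘ, hρL D hD _ hδΘ, hδL]
    exact tangentGap_tangentCrossing (hH hd hD hdD).ne'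
  have hlt : ∀ δ ∈ Θ, δ ≠ δstar → ρ d δstar < max (ρ d δ) (ρ D δ) := fun δ hδ hne => by
    rw [hρL d hd _ hδΘ, hρL d hd δ hδ, hρL D hD δ hδ, hδL]
    exact tangentGap_tangentCrossing_lt_max hΘ hL hH hd hD hdD hδ (hδL ▸ hne)
  refine ⟨hδ_mem, heq, ⟨⟨δstar, hδΘ, by simp [heq]⟩, ?_⟩, fun δ hδ hmax => ?_⟩
  · rintro _ ⟨δ, hδ, rfl⟩
    rcases eq_or_ne δ δstar with rfl | hne
    · simp [heq]
    · exact (hlt δ hδ hne).le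
  · by_contra hne
    exact (hlt δ hδ hne).ne' hmax
end

section
/- For the exponential model with conjugate priors π_{α,λ₀} having Bayes estimators Ψ(α, x) = (α+1)/(λ₀ + x), the PRGM estimator δ_PR(x) = [(α₁+1)(α₂+1)/(α₁−α₂)]·log((α₁+1)/(α₂+1))·1/(λ₀+x) equals Ψ(α*, x) for the data-independent hyperparameter α* = [(α₁+1)(α₂+1)/(α₁−α₂)]·log((α₁+1)/(α₂+1)) − 1, and moreover α* ∈ [α₁, α₂]. -/
open Real Set

/-! The factor `a * b / (a - b)` is negative, and multiplying it into the elementary bounds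
`1 - (a / b)⁻¹ ≤ log (a / b) ≤ a / b - 1` turns them into exactly `a` and `b`. -/

lemma mul_div_sub_mul_log_div_mem_Icc {a b : ℝ} (ha : 0 < a) (hab : a < b) :
    a * b / (a - b) * log (a / b) ∈ Icc a b := by
  have hb : 0 < b := ha.trans hab
  have hc : a * b / (a - b) ≤ 0 := div_nonpos_of_nonneg_of_nonpos (by positivity) (by linarith)
  have hlog_le : log (a / b) ≤ a / b - 1 := log_le_sub_one_of_pos (by positivity)
  have le_hlog : 1 - (a / b)⁻¹ ≤ log (a / b) := one_sub_inv_le_log_of_pos (by positivity)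
  have hsub : a - b ≠ 0 := by linarith
  constructor
  · calc a = a * b / (a - b) * (a / b - 1) := by field_simp
      _ ≤ a * b / (a - b) * log (a / b) := mul_le_mul_of_nonpos_left hlog_le hc
  · calc a * b / (a - b) * log (a / b) ≤ a * b / (a - b) * (1 - (a / b)⁻¹) :=
          mul_le_mul_of_nonpos_left le_hlog hc
      _ = b := by field_simp

theorem stmt_18_general (α₁ α₂ lam₀ x : ℝ) (h1 : 0 < α₁) (h12 : α₁ < α₂)
    (Ψ : ℝ → ℝ → ℝ) (hΨ : ∀ α y, Ψ α y = (α + 1) / (lam₀ + y))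
    (δPR : ℝ)
    (hδPR : δPR = (α₁ + 1) * (α₂ + 1) / (α₁ - α₂) *
      Real.log ((α₁ + 1) / (α₂ + 1)) * (1 / (lam₀ + x)))
    (αstar : ℝ)
    (hαstar : αstar = (α₁ + 1) * (α₂ + 1) / (α₁ - α₂) *
      Real.log ((α₁ + 1) / (α₂ + 1)) - 1) :
    δPR = Ψ αstar x ∧ αstar ∈ Icc α₁ α₂ := by
  have hmem : αstar + 1 ∈ Icc (α₁ + 1) (α₂ + 1) := by
    convert mul_div_sub_mul_log_div_mem_Icc (a := α₁ + 1) (b := α₂ + 1) (by linarith)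
      (by linarith) using 1
    rw [hαstar]; ring
  refine ⟨by rw [hΨ, hδPR, hαstar]; ring, ?_, ?_⟩ <;> linarith [hmem.1, hmem.2]

/-- For the exponential model with conjugate priors π_{α,λ₀}
having Bayes estimators `Ψ(α, x) = (α+1)/(λ₀ + x)`, the PRGM estimator
`δ_PR(x) = [(α₁+1)(α₂+1)/(α₁−α₂)]·log((α₁+1)/(α₂+1))·1/(λ₀+x)` equals
`Ψ(α*, x)` for the data-independent hyperparameter
`α* = [(α₁+1)(α₂+1)/(α₁−α₂)]·log((α₁+1)/(α₂+1)) − 1`, and α* ∈ [α₁, α₂]. -/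
theorem stmt_18 (α₁ α₂ lam₀ x : ℝ) (h1 : 0 < α₁) (h12 : α₁ < α₂)
    (hlam : 0 < lam₀) (hx : 0 < x)
    (Ψ : ℝ → ℝ → ℝ) (hΨ : ∀ α y, Ψ α y = (α + 1) / (lam₀ + y))
    (δPR : ℝ)
    (hδPR : δPR = (α₁ + 1) * (α₂ + 1) / (α₁ - α₂) *
      Real.log ((α₁ + 1) / (α₂ + 1)) * (1 / (lam₀ + x)))
    (αstar : ℝ)
    (hαstar : αstar = (α₁ + 1) * (α₂ + 1) / (α₁ - α₂) *
      Real.log ((α₁ + 1) / (α₂ + 1)) - 1) :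
    δPR = Ψ αstar x ∧ αstar ∈ Icc α₁ α₂ :=
  stmt_18_general α₁ α₂ lam₀ x h1 h12 Ψ hΨ δPR hδPR αstar hαstar
end
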